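/- arXiv:1008.5083 — 4 statements merged into one kernel-verified Lean document; each statement's English description precedes it below -/
import Mathlib

section
/- Let V be a finite-dimensional real vector space with a nondegenerate symmetric bilinear form g of indefinite signature (both positive and negative indices at least 1), dim V ≥ 3. If Q is a symmetric bilinear form on V such that Q(ξ,ξ) = 0 for every isotropic vector ξ (i.e. every nonzero ξ with g(ξ,ξ)=0), then Q = c·g for some real constant c. -/
/-!
If `g x x > 0 > g y y`, the line `t ↦ x + t • y` crosses the null cone of `g` at two distinct
parameters. The quadratics `t ↦ g (x + t • y) (x + t • y)` and `t ↦ Q (x + t • y) (x + t • y)`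
then share two roots, so by Vieta `Q x x * g y y = Q y y * g x x`. Hence `Q x x / g x x` is the
same constant `c` for all non-null `x`, while both sides vanish on null vectors; so `Q` and `c • g`
agree on the diagonal, and polarization gives `Q = c • g`.
-/

theorem mul_eq_mul_of_common_roots {K : Type*} [Field K] {a b d A B D t₁ t₂ : K} (ht : t₁ ≠ t₂)
    (h₁ : a + b * t₁ + d * t₁ ^ 2 = 0) (h₂ : a + b * t₂ + d * t₂ ^ 2 = 0)
    (H₁ : A + B * t₁ + D * t₁ ^ 2 = 0) (H₂ : A + B * t₂ + D * t₂ ^ 2 = 0) :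
    A * d = D * a := by
  have hsub : t₁ - t₂ ≠ 0 := sub_ne_zero.mpr ht
  -- Vieta: each constant term is its leading coefficient times `t₁ * t₂`.
  have hb : b = -d * (t₁ + t₂) :=
    mul_left_cancel₀ hsub (by linear_combination h₁ - h₂)
  have hB : B = -D * (t₁ + t₂) :=
    mul_left_cancel₀ hsub (by linear_combination H₁ - H₂)
  have ha : a = d * (t₁ * t₂) := by linear_combination h₁ - t₁ * hb
  have hA : A = D * (t₁ * t₂) := by linear_combination H₁ - t₁ * hB
  rw [ha, hA]; ring

theorem exists_two_roots_of_mul_neg {a b d : ℝ} (h : a * d < 0) :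
    ∃ t₁ t₂ : ℝ, t₁ ≠ t₂ ∧ a + b * t₁ + d * t₁ ^ 2 = 0 ∧ a + b * t₂ + d * t₂ ^ 2 = 0 := by
  have hd : d ≠ 0 := by rintro rfl; simp at h
  have hdisc : 0 < discrim d b a := by unfold discrim; nlinarith [sq_nonneg b]
  set s := √(discrim d b a)
  have hs : discrim d b a = s * s := (Real.mul_self_sqrt hdisc.le).symm
  have hroot (t : ℝ) :
      a + b * t + d * t ^ 2 = 0 ↔ t = (-b + s) / (2 * d) ∨ t = (-b - s) / (2 * d) := by
    rw [← quadratic_eq_zero_iff hd hs]; constructor <;> intro h <;> linear_combination h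
  refine ⟨_, _, ?_, (hroot _).mpr (Or.inl rfl), (hroot _).mpr (Or.inr rfl)⟩
  have hs_pos : 0 < s := Real.sqrt_pos.mpr hdisc
  intro h
  field_simp at h
  linarith

theorem LinearMap.apply_add_smul_self {R M : Type*} [CommRing R] [AddCommGroup M] [Module R M]
    (B : M →ₗ[R] M →ₗ[R] R) (x y : M) (t : R) :
    B (x + t • y) (x + t • y) = B x x + (B x y + B y x) * t + B y y * t ^ 2 := by
  simp only [map_add, map_smul, LinearMap.add_apply, LinearMap.smul_apply, smul_eq_mul]
  ring

section

variable {V : Type*} [AddCommGroup V] [Module ℝ V] {g Q : V →ₗ[ℝ] V →ₗ[ℝ] ℝ}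

theorem add_smul_ne_zero_of_mul_neg {x y : V} (h : g x x * g y y < 0) (t : ℝ) :
    x + t • y ≠ 0 := by
  intro hxy
  rw [add_eq_zero_iff_eq_neg.mp hxy] at h
  simp only [map_neg, map_smul, LinearMap.neg_apply, LinearMap.smul_apply, smul_eq_mul] at h
  nlinarith [sq_nonneg (t * g y y)]

theorem apply_self_mul_eq_of_isotropic_vanishing
    (hQ0 : ∀ ξ : V, ξ ≠ 0 → g ξ ξ = 0 → Q ξ ξ = 0) {x y : V} (h : g x x * g y y < 0) :
    Q x x * g y y = Q y y * g x x := by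
  obtain ⟨t₁, t₂, ht, h₁, h₂⟩ := exists_two_roots_of_mul_neg (b := g x y + g y x) h
  have hQ (t : ℝ) (ht : g x x + (g x y + g y x) * t + g y y * t ^ 2 = 0) :
      Q x x + (Q x y + Q y x) * t + Q y y * t ^ 2 = 0 := by
    rw [← LinearMap.apply_add_smul_self] at ht ⊢
    exact hQ0 _ (add_smul_ne_zero_of_mul_neg h t) ht
  exact mul_eq_mul_of_common_roots ht h₁ h₂ (hQ t₁ h₁) (hQ t₂ h₂)

theorem exists_apply_self_eq_mul_of_isotropic_vanishing
    (hpos : ∃ x, 0 < g x x) (hneg : ∃ x, g x x < 0)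
    (hQ0 : ∀ ξ : V, ξ ≠ 0 → g ξ ξ = 0 → Q ξ ξ = 0) :
    ∃ c : ℝ, ∀ x, Q x x = c * g x x := by
  obtain ⟨x₀, hx₀⟩ := hpos
  obtain ⟨y₀, hy₀⟩ := hneg
  have hratio {x z : V} (h : g x x * g z z < 0) : Q x x = Q z z / g z z * g x x := by
    have hz : g z z ≠ 0 := by rintro hz; simp [hz] at h
    rw [div_mul_eq_mul_div, eq_div_iff hz, apply_self_mul_eq_of_isotropic_vanishing hQ0 h]
  set c := Q x₀ x₀ / g x₀ x₀
  have hc_of_neg {x : V} (hx : g x x < 0) : Q x x = c * g x x :=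
    hratio (mul_neg_of_neg_of_pos hx hx₀)
  refine ⟨c, fun x => ?_⟩
  rcases lt_trichotomy (g x x) 0 with hx | hx | hx
  · exact hc_of_neg hx
  · by_cases hx0 : x = 0
    · simp [hx0]
    · rw [hQ0 x hx0 hx, hx, mul_zero]
  · have hc : Q y₀ y₀ / g y₀ y₀ = c := by rw [hc_of_neg hy₀, mul_div_cancel_right₀ _ hy₀.ne]
    rw [hratio (mul_neg_of_pos_of_neg hx hy₀), hc]

end

theorem stmt_0_general {V : Type*} [AddCommGroup V] [Module ℝ V]
    (g Q : V →ₗ[ℝ] V →ₗ[ℝ] ℝ)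
    (hg_symm : ∀ x y, g x y = g y x)
    (hpos : ∃ x, 0 < g x x) (hneg : ∃ x, g x x < 0)
    (hQ_symm : ∀ x y, Q x y = Q y x)
    (hQ0 : ∀ ξ : V, ξ ≠ 0 → g ξ ξ = 0 → Q ξ ξ = 0) :
    ∃ c : ℝ, Q = c • g := by
  obtain ⟨c, hc⟩ := exists_apply_self_eq_mul_of_isotropic_vanishing hpos hneg hQ0
  have hg : LinearMap.BilinForm.IsSymm g := ⟨hg_symm⟩
  have hQ : LinearMap.BilinForm.IsSymm Q := ⟨hQ_symm⟩
  exact ⟨c, LinearMap.BilinForm.ext_of_isSymm hQ (hg.smul c) hc⟩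

/-- Dajczer–Nomizu lemma: a symmetric bilinear form vanishing on the null cone of a
nondegenerate indefinite symmetric bilinear form is a scalar multiple of it. -/
theorem stmt_0 {V : Type*} [AddCommGroup V] [Module ℝ V] [FiniteDimensional ℝ V]
    (hdim : 3 ≤ Module.finrank ℝ V)
    (g Q : V →ₗ[ℝ] V →ₗ[ℝ] ℝ)
    (hg_symm : ∀ x y, g x y = g y x)
    (hg_nondeg : ∀ x, (∀ y, g x y = 0) → x = 0)
    (hpos : ∃ x, 0 < g x x) (hneg : ∃ x, g x x < 0)
    (hQ_symm : ∀ x y, Q x y = Q y x)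
    (hQ0 : ∀ ξ : V, ξ ≠ 0 → g ξ ξ = 0 → Q ξ ξ = 0) :
    ∃ c : ℝ, Q = c • g :=
  stmt_0_general g Q hg_symm hpos hneg hQ_symm hQ0
end

section
/- Let V be a finite-dimensional real vector space with a nondegenerate indefinite symmetric bilinear form g. If Q is a symmetric bilinear form on V that is not a scalar multiple of g, then there exists an isotropic vector ξ with Q(ξ,ξ) ≠ 0. -/
/-!
Take `p` spacelike and `n` timelike. Along the line `t ↦ p + t • n`, `g` is a quadratic in `t`
whose leading and constant coefficients `g n n`, `g p p` have opposite signs, so it has two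
distinct real roots, i.e. two null vectors. `Q` vanishes there too, and two quadratics with the
same two distinct roots are proportional; comparing coefficients gives
`Q p p / g p p = Q n n / g n n`. Hence `Q x x = c * g x x` for one constant `c` and all `x`
(trivially on the null cone), and polarization yields `Q = c • g`.
-/

theorem exists_ne_quadratic_eq_zero_of_mul_neg {a b c : ℝ} (h : a * c < 0) :
    ∃ x y, x ≠ y ∧ a * (x * x) + b * x + c = 0 ∧ a * (y * y) + b * y + c = 0 := by
  have ha : a ≠ 0 := by rintro rfl; simp at h
  have hd : 0 < discrim a b c := by rw [discrim]; nlinarith [sq_nonneg b]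
  set s := √(discrim a b c)
  have hs : 0 < s := Real.sqrt_pos.2 hd
  have hsq : discrim a b c = s * s := (Real.mul_self_sqrt hd.le).symm
  refine ⟨(-b + s) / (2 * a), (-b - s) / (2 * a), ?_, ?_, ?_⟩
  · rw [Ne, div_left_inj' (mul_ne_zero two_ne_zero ha)]
    linarith
  · exact (quadratic_eq_zero_iff ha hsq _).2 (Or.inl rfl)
  · exact (quadratic_eq_zero_iff ha hsq _).2 (Or.inr rfl)

theorem mul_eq_mul_of_quadratic_eq_zero_of_ne {K : Type*} [Field K]
    {a b c a' b' c' x y : K}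
    (hxy : x ≠ y) (hx : a * (x * x) + b * x + c = 0) (hy : a * (y * y) + b * y + c = 0)
    (hx' : a' * (x * x) + b' * x + c' = 0) (hy' : a' * (y * y) + b' * y + c' = 0) :
    a * c' = a' * c := by
  have hb : b = -a * (x + y) :=
    mul_left_cancel₀ (sub_ne_zero.2 hxy) (by linear_combination hx - hy)
  have hb' : b' = -a' * (x + y) :=
    mul_left_cancel₀ (sub_ne_zero.2 hxy) (by linear_combination hx' - hy')
  linear_combination a * hx' - a' * hx + x * (a' * hb - a * hb')

namespace LinearMap.BilinForm

variable {R M : Type*} [CommRing R] [AddCommGroup M] [Module R M]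

theorem apply_add_smul_apply_add_smul (B : LinearMap.BilinForm R M) (x y : M) (t : R) :
    B (x + t • y) (x + t • y) = B y y * (t * t) + (B x y + B y x) * t + B x x := by
  simp only [map_add, map_smul, LinearMap.add_apply, LinearMap.smul_apply, smul_eq_mul]
  ring

variable {V : Type*} [AddCommGroup V] [Module ℝ V] {g Q : LinearMap.BilinForm ℝ V}

theorem apply_self_mul_eq_of_isotropic_eq_zero
    (hnull : ∀ ξ, ξ ≠ 0 → g ξ ξ = 0 → Q ξ ξ = 0) {p n : V}
    (hp : 0 < g p p) (hn : g n n < 0) :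
    Q p p * g n n = Q n n * g p p := by
  have hne : ∀ t : ℝ, p + t • n ≠ 0 := fun t h ↦ by
    have hg : g p p = g n n * (t * t) := by
      rw [eq_neg_of_add_eq_zero_left h]
      simp only [map_neg, map_smul, LinearMap.neg_apply, LinearMap.smul_apply, smul_eq_mul]
      ring
    nlinarith [mul_self_nonneg t]
  have hroot : ∀ t, g (p + t • n) (p + t • n) = 0 → Q (p + t • n) (p + t • n) = 0 :=
    fun t ↦ hnull _ (hne t)
  simp only [apply_add_smul_apply_add_smul] at hroot
  obtain ⟨x, y, hxy, hx, hy⟩ :=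
    exists_ne_quadratic_eq_zero_of_mul_neg (b := g p n + g n p) (mul_neg_of_neg_of_pos hn hp)
  linarith [mul_eq_mul_of_quadratic_eq_zero_of_ne hxy hx hy (hroot x hx) (hroot y hy)]

theorem exists_apply_self_eq_mul_of_isotropic_eq_zero
    (hnull : ∀ ξ, ξ ≠ 0 → g ξ ξ = 0 → Q ξ ξ = 0) (hpos : ∃ x, 0 < g x x)
    (hneg : ∃ x, g x x < 0) : ∃ c : ℝ, ∀ x, Q x x = c * g x x := by
  obtain ⟨p, hp⟩ := hpos
  obtain ⟨n, hn⟩ := hneg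
  have hpn := apply_self_mul_eq_of_isotropic_eq_zero hnull hp hn
  refine ⟨Q n n / g n n, fun x ↦ ?_⟩
  rw [div_mul_eq_mul_div, eq_div_iff hn.ne]
  rcases lt_trichotomy (g x x) 0 with hx | hx | hx
  · have hpx := apply_self_mul_eq_of_isotropic_eq_zero hnull hp hx
    refine mul_right_cancel₀ hp.ne' ?_
    linear_combination g n n * hpx.symm + g x x * hpn
  · by_cases hx0 : x = 0
    · simp [hx0]
    · simp [hx, hnull x hx0 hx]
  · exact apply_self_mul_eq_of_isotropic_eq_zero hnull hx hn

theorem exists_eq_smul_of_isotropic_eq_zero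
    (hnull : ∀ ξ, ξ ≠ 0 → g ξ ξ = 0 → Q ξ ξ = 0) (hg : g.IsSymm) (hQ : Q.IsSymm)
    (hpos : ∃ x, 0 < g x x) (hneg : ∃ x, g x x < 0) : ∃ c : ℝ, Q = c • g := by
  obtain ⟨c, hc⟩ := exists_apply_self_eq_mul_of_isotropic_eq_zero hnull hpos hneg
  exact ⟨c, ext_of_isSymm hQ (hg.smul c) hc⟩

end LinearMap.BilinForm

theorem stmt_1_general {V : Type*} [AddCommGroup V] [Module ℝ V]
    (g Q : V →ₗ[ℝ] V →ₗ[ℝ] ℝ)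
    (hg_symm : ∀ x y, g x y = g y x)
    (hpos : ∃ x, 0 < g x x) (hneg : ∃ x, g x x < 0)
    (hQ_symm : ∀ x y, Q x y = Q y x)
    (hQ : ∀ c : ℝ, Q ≠ c • g) :
    ∃ ξ : V, ξ ≠ 0 ∧ g ξ ξ = 0 ∧ Q ξ ξ ≠ 0 := by
  by_contra hnull
  push Not at hnull
  obtain ⟨c, hc⟩ := LinearMap.BilinForm.exists_eq_smul_of_isotropic_eq_zero hnull
    ⟨hg_symm⟩ ⟨hQ_symm⟩ hpos hneg
  exact hQ c hc

/-- Contrapositive Dajczer–Nomizu: if a symmetric bilinear form is not a multiple of the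
nondegenerate indefinite form g, it is nonzero on some isotropic vector. -/
theorem stmt_1 {V : Type*} [AddCommGroup V] [Module ℝ V] [FiniteDimensional ℝ V]
    (hdim : 3 ≤ Module.finrank ℝ V)
    (g Q : V →ₗ[ℝ] V →ₗ[ℝ] ℝ)
    (hg_symm : ∀ x y, g x y = g y x)
    (hg_nondeg : ∀ x, (∀ y, g x y = 0) → x = 0)
    (hpos : ∃ x, 0 < g x x) (hneg : ∃ x, g x x < 0)
    (hQ_symm : ∀ x y, Q x y = Q y x)
    (hQ : ∀ c : ℝ, Q ≠ c • g) :
    ∃ ξ : V, ξ ≠ 0 ∧ g ξ ξ = 0 ∧ Q ξ ξ ≠ 0 :=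
  stmt_1_general g Q hg_symm hpos hneg hQ_symm hQ
end

section
/- Let (V,g) be an indefinite inner product space of dimension n ≥ 3, and let ḡ be another symmetric bilinear form on V such that ḡ(ξ,ξ) = 0 for all isotropic vectors ξ of g lying in some nonempty open subset of the null cone of g. Then ḡ = c·g on the span of those isotropic vectors, and if that span is all of V, ḡ = c·g globally. -/
/-!
If `u` is `g`-isotropic with `g ξ₀ u = 1`, then `x ↦ g x u • x - (g x x / 2) • u` maps `V` into
the null cone of `g` and fixes `ξ₀`. Applied to `ξ₀ + t • w` it gives a polynomial curve of
isotropic vectors that stays in `U` for small `t`, so `ḡ` vanishes along it. The coefficients of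
`t` and `t ^ 2` give `ḡ ξ₀ = c • g ξ₀` and `ḡ = c • g` on `ξ₀^⊥`, with `c = ḡ ξ₀ u`. Comparing two
such points through `g ξ ξ'`, or through `ξ^⊥` when `g ξ ξ' = 0`, shows that `c` is the same at all
of them, and `{x | ḡ x = c • g x}` is a subspace.
-/

open Polynomial Filter Topology

theorem coeffs_one_two_eq_zero_of_eventually_eq_zero {a b c d : ℝ}
    (h : ∀ᶠ t in 𝓝 (0 : ℝ), a * t + b * t ^ 2 + t ^ 3 * (c + d * t) = 0) : a = 0 ∧ b = 0 := by
  set p : ℝ[X] := C a * X + C b * X ^ 2 + X ^ 3 * (C c + C d * X)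
  have hp : p = 0 := p.eq_zero_of_infinite_isRoot <| infinite_of_mem_nhds 0 <| by
    filter_upwards [h] with t ht
    simpa [p] using ht
  constructor
  · simpa [p, coeff_X_pow_mul', coeff_X] using congrArg (coeff · 1) hp
  · simpa [p, coeff_X_pow_mul', coeff_X] using congrArg (coeff · 2) hp

section Field

variable {K V : Type*} [Field K] [AddCommGroup V] [Module K V]

theorem LinearMap.eq_smul_of_ker_le {f h : V →ₗ[K] K} {z : V} (hz : f z = 1)
    (hker : ∀ w, f w = 0 → h w = 0) : h = h z • f := by
  ext w
  have := hker (w - f w • z) (by simp [hz])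
  simp only [map_sub, map_smul, smul_eq_mul] at this
  simp only [LinearMap.smul_apply, smul_eq_mul]
  linear_combination this

variable {g : V →ₗ[K] V →ₗ[K] K}

theorem exists_apply_eq_one (hg_nondeg : ∀ x, (∀ y, g x y = 0) → x = 0) {ξ : V} (hξ : ξ ≠ 0) :
    ∃ z, g ξ z = 1 := by
  obtain ⟨y, hy⟩ : ∃ y, g ξ y ≠ 0 := by
    by_contra! h
    exact hξ (hg_nondeg ξ h)
  exact ⟨(g ξ y)⁻¹ • y, by simp [hy]⟩

theorem exists_isotropic_apply_eq_one [NeZero (2 : K)] (hg : ∀ x y, g x y = g y x)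
    (hg_nondeg : ∀ x, (∀ y, g x y = 0) → x = 0) {ξ : V} (hξ : ξ ≠ 0) (hξ_iso : g ξ ξ = 0) :
    ∃ u, g u u = 0 ∧ g ξ u = 1 := by
  obtain ⟨z, hz⟩ := exists_apply_eq_one hg_nondeg hξ
  refine ⟨z - (g z z / 2) • ξ, ?_, by simp [hz, hξ_iso]⟩
  simp only [map_sub, map_smul, LinearMap.sub_apply, LinearMap.smul_apply, smul_eq_mul,
    hg z ξ, hz, hξ_iso]
  field_simp
  ring

theorem homothety_const_eq (hg : ∀ x y, g x y = g y x) (hg_nondeg : ∀ x, (∀ y, g x y = 0) → x = 0)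
    {gbar : V →ₗ[K] V →ₗ[K] K} (hgbar : ∀ x y, gbar x y = gbar y x) {ξ ξ' : V} {c c' : K}
    (hξ : ξ ≠ 0) (hξ' : ξ' ≠ 0) (hc : ∀ w, gbar ξ w = c * g ξ w)
    (hc_perp : ∀ w w', g ξ w = 0 → g ξ w' = 0 → gbar w w' = c * g w w')
    (hc' : ∀ w, gbar ξ' w = c' * g ξ' w) : c' = c := by
  -- If `c' ≠ c`, then `ξ'` is `g`-orthogonal to `ξ` and to `ξ^⊥`, hence proportional to `ξ`.
  by_contra hne
  have hperp : g ξ ξ' = 0 := by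
    have : (c - c') * g ξ ξ' = 0 := by
      linear_combination hc' ξ - hc ξ' - hgbar ξ' ξ + c' * hg ξ' ξ
    exact (mul_eq_zero.mp this).resolve_left (sub_ne_zero.mpr (Ne.symm hne))
  obtain ⟨z, hz⟩ := exists_apply_eq_one hg_nondeg hξ
  have hker : g ξ' = g ξ' z • g ξ := LinearMap.eq_smul_of_ker_le hz fun w hw ↦ by
    have : (c - c') * g ξ' w = 0 := by linear_combination hc' w - hc_perp ξ' w hperp hw
    exact (mul_eq_zero.mp this).resolve_left (sub_ne_zero.mpr (Ne.symm hne))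
  have hξ'_eq : ξ' = g ξ' z • ξ := sub_eq_zero.mp <| hg_nondeg _ fun y ↦ by
    simp [LinearMap.congr_fun hker y]
  obtain ⟨z', hz'⟩ := exists_apply_eq_one hg_nondeg hξ'
  have hc'' (w : V) : gbar ξ' w = c * g ξ' w := by
    rw [hξ'_eq]
    simp [hc, mul_left_comm]
  exact hne (by simpa [hz'] using (hc' z').symm.trans (hc'' z'))

end Field

section Topological

variable {V : Type*} [AddCommGroup V] [Module ℝ V] [TopologicalSpace V]
  [IsTopologicalAddGroup V] [ContinuousSMul ℝ V] {g gbar : V →ₗ[ℝ] V →ₗ[ℝ] ℝ} {U : Set V}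

theorem apply_eq_mul_of_isotropic_mem (hg : ∀ x y, g x y = g y x)
    (hgbar : ∀ x y, gbar x y = gbar y x) (hU : IsOpen U)
    (hnull : ∀ ξ ∈ U, g ξ ξ = 0 → gbar ξ ξ = 0) {ξ₀ u : V} (hξ₀U : ξ₀ ∈ U)
    (hξ₀_iso : g ξ₀ ξ₀ = 0) (hu : g u u = 0) (hξ₀u : g ξ₀ u = 1) (w : V) :
    gbar ξ₀ w = gbar ξ₀ u * g ξ₀ w ∧ (g ξ₀ w = 0 → gbar w w = gbar ξ₀ u * g w w) := by
  let ξ : ℝ → V := fun t ↦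
    (1 + g w u * t) • (ξ₀ + t • w) - ((2 * g ξ₀ w * t + g w w * t ^ 2) / 2) • u
  have hξ_iso (t : ℝ) : g (ξ t) (ξ t) = 0 := by
    simp only [ξ, map_sub, map_add, map_smul, LinearMap.sub_apply, LinearMap.add_apply,
      LinearMap.smul_apply, smul_eq_mul, hg w ξ₀, hg u ξ₀, hg u w, hξ₀_iso, hu, hξ₀u]
    ring
  have hξU : ∀ᶠ t in 𝓝 0, ξ t ∈ U :=
    (show Continuous ξ by fun_prop).continuousAt.preimage_mem_nhds
      (by simpa [ξ] using hU.mem_nhds hξ₀U)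
  have hgbar_ξ (t : ℝ) : gbar (ξ t) (ξ t) =
      2 * (gbar ξ₀ w - g ξ₀ w * gbar ξ₀ u) * t
        + (gbar w w + 4 * g w u * gbar ξ₀ w - (g w w + 2 * g ξ₀ w * g w u) * gbar ξ₀ u
            - 2 * g ξ₀ w * gbar w u + g ξ₀ w ^ 2 * gbar u u) * t ^ 2
        + t ^ 3 * ((2 * g w u * gbar w w + 2 * g w u ^ 2 * gbar ξ₀ w
              - g w u * g w w * gbar ξ₀ u - (g w w + 2 * g ξ₀ w * g w u) * gbar w u
              + g ξ₀ w * g w w * gbar u u)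
            + (g w u ^ 2 * gbar w w - g w u * g w w * gbar w u + g w w ^ 2 / 4 * gbar u u) * t) := by
    simp only [ξ, map_sub, map_add, map_smul, LinearMap.sub_apply, LinearMap.add_apply,
      LinearMap.smul_apply, smul_eq_mul, hgbar w ξ₀, hgbar u ξ₀, hgbar u w,
      hnull ξ₀ hξ₀U hξ₀_iso]
    ring
  obtain ⟨h₁, h₂⟩ := coeffs_one_two_eq_zero_of_eventually_eq_zero <| by
    filter_upwards [hξU] with t ht
    rw [← hgbar_ξ]
    exact hnull _ ht (hξ_iso t)
  refine ⟨by linear_combination h₁ / 2, fun hw ↦ ?_⟩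
  rw [hw] at h₁ h₂
  linear_combination h₂ - 2 * g w u * h₁

theorem exists_homothety_at_isotropic_mem (hg : ∀ x y, g x y = g y x)
    (hg_nondeg : ∀ x, (∀ y, g x y = 0) → x = 0) (hgbar : ∀ x y, gbar x y = gbar y x)
    (hU : IsOpen U) (hnull : ∀ ξ ∈ U, g ξ ξ = 0 → gbar ξ ξ = 0) {ξ₀ : V} (hξ₀U : ξ₀ ∈ U)
    (hξ₀ : ξ₀ ≠ 0) (hξ₀_iso : g ξ₀ ξ₀ = 0) :
    ∃ c : ℝ, (∀ w, gbar ξ₀ w = c * g ξ₀ w) ∧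
      ∀ w w', g ξ₀ w = 0 → g ξ₀ w' = 0 → gbar w w' = c * g w w' := by
  obtain ⟨u, hu, hξ₀u⟩ := exists_isotropic_apply_eq_one hg hg_nondeg hξ₀ hξ₀_iso
  have key := apply_eq_mul_of_isotropic_mem hg hgbar hU hnull hξ₀U hξ₀_iso hu hξ₀u
  refine ⟨gbar ξ₀ u, fun w ↦ (key w).1, fun w w' hw hw' ↦ ?_⟩
  have hsum := (key (w + w')).2 (by simp [hw, hw'])
  simp only [map_add, LinearMap.add_apply, hgbar w' w, hg w' w] at hsum
  linear_combination (hsum - (key w).2 hw - (key w').2 hw') / 2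

end Topological

theorem stmt_13_general {V : Type*}
    [NormedAddCommGroup V] [NormedSpace ℝ V]
    (g gbar : V →ₗ[ℝ] V →ₗ[ℝ] ℝ)
    (hg_symm : ∀ x y, g x y = g y x)
    (hg_nondeg : ∀ x, (∀ y, g x y = 0) → x = 0)
    (hgbar_symm : ∀ x y, gbar x y = gbar y x)
    (U : Set V) (hU : IsOpen U)
    (hne : (U ∩ {ξ : V | ξ ≠ 0 ∧ g ξ ξ = 0}).Nonempty)
    (hnull : ∀ ξ ∈ U, ξ ≠ 0 → g ξ ξ = 0 → gbar ξ ξ = 0) :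
    ∃ c : ℝ,
      (∀ x ∈ Submodule.span ℝ (U ∩ {ξ : V | ξ ≠ 0 ∧ g ξ ξ = 0}),
        ∀ y ∈ Submodule.span ℝ (U ∩ {ξ : V | ξ ≠ 0 ∧ g ξ ξ = 0}),
          gbar x y = c * g x y) ∧
      (Submodule.span ℝ (U ∩ {ξ : V | ξ ≠ 0 ∧ g ξ ξ = 0}) = ⊤ →
        ∀ x y, gbar x y = c * g x y) := by
  have hnull₀ : ∀ ξ ∈ U, g ξ ξ = 0 → gbar ξ ξ = 0 := fun ξ hξU hξ ↦ by
    rcases eq_or_ne ξ 0 with rfl | hξ₀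
    · simp
    · exact hnull ξ hξU hξ₀ hξ
  obtain ⟨ξ₀, hξ₀U, hξ₀, hξ₀_iso⟩ := hne
  obtain ⟨c, hc, hc_perp⟩ := exists_homothety_at_isotropic_mem hg_symm hg_nondeg hgbar_symm hU
    hnull₀ hξ₀U hξ₀ hξ₀_iso
  have hspan : Submodule.span ℝ (U ∩ {ξ : V | ξ ≠ 0 ∧ g ξ ξ = 0}) ≤
      LinearMap.ker (gbar - c • g) := by
    rw [Submodule.span_le]
    rintro ξ ⟨hξU, hξ, hξ_iso⟩
    obtain ⟨c', hc', -⟩ := exists_homothety_at_isotropic_mem hg_symm hg_nondeg hgbar_symm hU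
      hnull₀ hξU hξ hξ_iso
    have hc'c := homothety_const_eq hg_symm hg_nondeg hgbar_symm hξ₀ hξ hc hc_perp hc'
    ext w
    simp [hc', hc'c]
  have hmem {x} (hx : x ∈ Submodule.span ℝ (U ∩ {ξ : V | ξ ≠ 0 ∧ g ξ ξ = 0})) (y : V) :
      gbar x y = c * g x y := by
    simpa [sub_eq_zero] using LinearMap.congr_fun (hspan hx) y
  exact ⟨c, fun x hx y _ ↦ hmem hx y, fun htop x y ↦ hmem (htop ▸ Submodule.mem_top) y⟩

/-- If ḡ vanishes on all isotropic vectors of g in a nonempty open subset of the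
null cone, then ḡ = c·g on the span of those vectors, and globally if they span V. -/
theorem stmt_13 {V : Type*}
    [NormedAddCommGroup V] [NormedSpace ℝ V] [FiniteDimensional ℝ V]
    (hdim : 3 ≤ Module.finrank ℝ V)
    (g gbar : V →ₗ[ℝ] V →ₗ[ℝ] ℝ)
    (hg_symm : ∀ x y, g x y = g y x)
    (hg_nondeg : ∀ x, (∀ y, g x y = 0) → x = 0)
    (hpos : ∃ x, 0 < g x x) (hneg : ∃ x, g x x < 0)
    (hgbar_symm : ∀ x y, gbar x y = gbar y x)
    (U : Set V) (hU : IsOpen U)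
    (hne : (U ∩ {ξ : V | ξ ≠ 0 ∧ g ξ ξ = 0}).Nonempty)
    (hnull : ∀ ξ ∈ U, ξ ≠ 0 → g ξ ξ = 0 → gbar ξ ξ = 0) :
    ∃ c : ℝ,
      (∀ x ∈ Submodule.span ℝ (U ∩ {ξ : V | ξ ≠ 0 ∧ g ξ ξ = 0}),
        ∀ y ∈ Submodule.span ℝ (U ∩ {ξ : V | ξ ≠ 0 ∧ g ξ ξ = 0}),
          gbar x y = c * g x y) ∧
      (Submodule.span ℝ (U ∩ {ξ : V | ξ ≠ 0 ∧ g ξ ξ = 0}) = ⊤ →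
        ∀ x y, gbar x y = c * g x y) :=
  stmt_13_general g gbar hg_symm hg_nondeg hgbar_symm U hU hne hnull
end

section
/- Let (V,g,J) be a Kähler algebraic setting of dimension 2n ≥ 4 with nondegenerate J-invariant indefinite symmetric bilinear form g. If R is a Kähler algebraic curvature tensor with R(ξ,Jξ,Jξ,ξ) = 0 for every isotropic vector ξ, then R has vanishing Bochner curvature tensor, i.e. R = (1/(2(n+2)))(φ+ψ)(S) − (τ/(4(n+1)(n+2)))(π₁+π₂). -/
/-!
Write `H(x) = R(x, Jx, Jx, x)`, a quartic form vanishing on the null cone of the indefinite form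
`g`. Choose `a` with `g(a,a) = 1` and split `x = t a + v` with `v ⟂ a`. For a suitable bilinear
`Q₀` (built from `R` and `a`), `H(x) - g(x,x) Q₀(x,x)` is affine in `t` and vanishes at the two
null points `t = ±√(-g(v,v))`, hence vanishes whenever `g(v,v) < 0`, and then everywhere by
analytic continuation along lines (the hyperplane `a⟂` contains a vector of negative length).
Averaging `Q₀` over `J` gives a `J`-invariant symmetric `Q` with `H(x) = g(x,x) Q(x,x)`, which is
also the holomorphic sectional curvature of the model tensor `(φ + ψ)(Q) / 8`. A Kähler curvature
tensor is determined by its holomorphic sectional curvature, so `R = (φ + ψ)(Q) / 8`, and taking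
the Ricci contraction expresses `Q` through `S` and `τ`.
-/
/-- π₁(z,u,v,w) = g(z,w)g(u,v) − g(z,v)g(u,w). -/
def pi1 {V : Type*} (g : V → V → ℝ) (z u v w : V) : ℝ :=
  g z w * g u v - g z v * g u w

/-- Kulkarni–Nomizu type operator φ. -/
def phi {V : Type*} (g Q : V → V → ℝ) (x y z u : V) : ℝ :=
  g x u * Q y z - g x z * Q y u + g y z * Q x u - g y u * Q x z

/-- The operator ψ of the paper. -/
def psi {V : Type*} (J : V → V) (g Q : V → V → ℝ) (x y z u : V) : ℝ :=
  g x (J u) * Q y (J z) - g x (J z) * Q y (J u) - 2 * g x (J y) * Q z (J u)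
    + g y (J z) * Q x (J u) - g y (J u) * Q x (J z) - 2 * g z (J u) * Q x (J y)

/-- π₂(x,y,z,u) = g(x,Ju)g(y,Jz) − g(x,Jz)g(y,Ju) − 2g(x,Jy)g(z,Ju). -/
def pi2 {V : Type*} (J : V → V) (g : V → V → ℝ) (x y z u : V) : ℝ :=
  g x (J u) * g y (J z) - g x (J z) * g y (J u) - 2 * g x (J y) * g z (J u)

open Filter Topology

section

variable {V : Type*} [AddCommGroup V] [Module ℝ V]

/-- Curvature tensors are unbundled functions, linear in the first slot only: linearity in the other
slots follows from the symmetries. -/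
structure IsCurvatureTensor (T : V → V → V → V → ℝ) : Prop where
  linear_left : ∀ y z u, IsLinearMap ℝ (T · y z u)
  antisymm_left : ∀ x y z u, T x y z u = -T y x z u
  antisymm_right : ∀ x y z u, T x y z u = -T x y u z
  pair_symm : ∀ x y z u, T x y z u = T z u x y
  bianchi : ∀ x y z u, T x y z u + T y z x u + T z x y u = 0

structure IsKaehlerCurvatureTensor (J : V →ₗ[ℝ] V) (T : V → V → V → V → ℝ) : Prop
    extends IsCurvatureTensor T where
  map_J : ∀ x y z u, T (J x) (J y) z u = T x y z u

namespace IsCurvatureTensor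

variable {T T' : V → V → V → V → ℝ} (hT : IsCurvatureTensor T)
include hT

theorem map_add₁ (x x' y z u : V) : T (x + x') y z u = T x y z u + T x' y z u :=
  (hT.linear_left y z u).map_add x x'

theorem map_smul₁ (c : ℝ) (x y z u : V) : T (c • x) y z u = c * T x y z u :=
  (hT.linear_left y z u).map_smul c x

theorem map_add₂ (x y y' z u : V) : T x (y + y') z u = T x y z u + T x y' z u := by
  rw [hT.antisymm_left, hT.map_add₁, hT.antisymm_left y, hT.antisymm_left y', neg_add, neg_neg,
    neg_neg]

theorem map_add₃ (x y z z' u : V) : T x y (z + z') u = T x y z u + T x y z' u := by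
  rw [hT.pair_symm, hT.map_add₁, hT.pair_symm z, hT.pair_symm z']

theorem map_add₄ (x y z u u' : V) : T x y z (u + u') = T x y z u + T x y z u' := by
  rw [hT.pair_symm, hT.map_add₂, hT.pair_symm z, hT.pair_symm z]

theorem map_neg₁ (x y z u : V) : T (-x) y z u = -T x y z u :=
  (hT.linear_left y z u).map_neg x

theorem map_neg₂ (x y z u : V) : T x (-y) z u = -T x y z u := by
  rw [hT.antisymm_left, hT.map_neg₁, hT.antisymm_left y, neg_neg]

theorem map_neg₃ (x y z u : V) : T x y (-z) u = -T x y z u := by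
  rw [hT.pair_symm, hT.map_neg₁, hT.pair_symm z]

theorem map_neg₄ (x y z u : V) : T x y z (-u) = -T x y z u := by
  rw [hT.pair_symm, hT.map_neg₂, hT.pair_symm z]

theorem sub (hT' : IsCurvatureTensor T') : IsCurvatureTensor (T - T') where
  linear_left y z u :=
    ⟨fun x x' => by simp only [Pi.sub_apply, hT.map_add₁, hT'.map_add₁]; ring,
      fun c x => by simp only [Pi.sub_apply, hT.map_smul₁, hT'.map_smul₁, smul_eq_mul]; ring⟩
  antisymm_left x y z u := by
    simp only [Pi.sub_apply]; rw [hT.antisymm_left x, hT'.antisymm_left x]; ring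
  antisymm_right x y z u := by
    simp only [Pi.sub_apply]; rw [hT.antisymm_right x y z, hT'.antisymm_right x y z]; ring
  pair_symm x y z u := by simp only [Pi.sub_apply]; rw [hT.pair_symm x, hT'.pair_symm x]
  bianchi x y z u := by
    simp only [Pi.sub_apply]
    linarith [hT.bianchi x y z u, hT'.bianchi x y z u]

theorem eq_zero_of_sectional (h : ∀ x y, T x y y x = 0) : T = 0 := by
  have h₁ : ∀ x y z, T x y y z = 0 := by
    intro x y z
    have hxz := h (x + z) y
    rw [hT.map_add₁, hT.map_add₄, hT.map_add₄] at hxz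
    linarith [h x y, h z y, hT.pair_symm z y y x, hT.antisymm_left y x z y,
      hT.antisymm_right x y z y]
  have h₂ : ∀ x y w z, T x y w z = -T x w y z := by
    intro x y w z
    have hyw := h₁ x (y + w) z
    rw [hT.map_add₂, hT.map_add₃, hT.map_add₃] at hyw
    linarith [h₁ x y z, h₁ x w z]
  ext x y z u
  have := hT.bianchi x y z u
  simp only [Pi.zero_apply]
  linarith [h₂ y z x u, hT.antisymm_left y x z u, h₂ z x y u, hT.antisymm_left z y x u,
    h₂ y x z u]

end IsCurvatureTensor

namespace IsKaehlerCurvatureTensor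

variable {J : V →ₗ[ℝ] V} {T T' : V → V → V → V → ℝ}

theorem sub (hT : IsKaehlerCurvatureTensor J T) (hT' : IsKaehlerCurvatureTensor J T') :
    IsKaehlerCurvatureTensor J (T - T') where
  toIsCurvatureTensor := hT.toIsCurvatureTensor.sub hT'.toIsCurvatureTensor
  map_J x y z u := by simp [hT.map_J, hT'.map_J]

variable (hT : IsKaehlerCurvatureTensor J T) (hJ : ∀ x, J (J x) = -x)
include hT hJ

theorem map_J_left (x y z u : V) : T (J x) y z u = -T x (J y) z u := by
  rw [← hT.map_J x (J y), hJ, hT.map_neg₂, neg_neg]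

theorem map_J_right (x y z u : V) : T x y (J z) u = -T x y z (J u) := by
  rw [hT.pair_symm, hT.map_J_left hJ, hT.pair_symm z]

theorem holomorphic_map_J (x : V) :
    T (J x) (J (J x)) (J (J x)) (J x) = T x (J x) (J x) x := by
  rw [hT.map_J, hT.map_J_right hJ, hJ, hT.map_neg₄, neg_neg]

theorem eq_zero_of_holomorphic_sectional (h : ∀ x, T x (J x) (J x) x = 0) : T = 0 := by
  have key : ∀ x y, T x y y x + 3 * T x (J y) (J y) x = 0 := by
    intro x y
    have hp := h (x + y)
    have hm := h (x + -y)
    simp only [map_add, map_neg, hT.map_add₁, hT.map_add₂, hT.map_add₃, hT.map_add₄,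
      hT.map_neg₁, hT.map_neg₂, hT.map_neg₃, hT.map_neg₄] at hp hm
    have e₁ : T y (J x) (J x) y = T x (J y) (J y) x := by
      rw [hT.pair_symm, hT.map_J_left hJ, hT.map_J_right hJ]
    have e₂ : T y (J x) (J y) x = T x (J y) (J y) x := by
      rw [hT.pair_symm, hT.map_J_left hJ, ← hT.antisymm_right, e₁]
    have e₃ : T x (J y) (J x) y = T x (J y) (J y) x := by
      rw [hT.pair_symm, hT.map_J_left hJ, ← hT.antisymm_right]
    have e₄ : T x (J x) (J y) y = T x y y x + T x (J y) (J y) x := by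
      have := hT.bianchi x (J x) (J y) y
      rw [hT.map_J, hT.map_J_left hJ y, e₁, hT.antisymm_right x y x] at this
      linarith
    have e₅ : T y (J y) (J x) x = T x y y x + T x (J y) (J y) x := by
      have := hT.bianchi y (J y) (J x) x
      rw [hT.map_J, hT.map_J_left hJ x, hT.antisymm_right y x y, hT.pair_symm y x] at this
      linarith
    linarith [h x, h y]
  refine hT.eq_zero_of_sectional fun x y => ?_
  have hJy := key x (J y)
  rw [hJ, hT.map_neg₂, hT.map_neg₃, neg_neg] at hJy
  linarith [key x y]

end IsKaehlerCurvatureTensor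

structure IsHermitianForm (J : V →ₗ[ℝ] V) (B : LinearMap.BilinForm ℝ V) : Prop where
  symm : ∀ x y, B x y = B y x
  map_J : ∀ x y, B (J x) (J y) = B x y

namespace IsHermitianForm

variable {J : V →ₗ[ℝ] V} {B : LinearMap.BilinForm ℝ V}
  (hB : IsHermitianForm J B) (hJ : ∀ x, J (J x) = -x)
include hB hJ

theorem apply_J_left (x y : V) : B (J x) y = -B x (J y) := by
  rw [← hB.map_J x (J y), hJ, map_neg, neg_neg]

theorem apply_J_right (x y : V) : B x (J y) = -B y (J x) := by
  rw [hB.symm, hB.apply_J_left hJ]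

theorem apply_self_J (x : V) : B x (J x) = 0 := by
  linarith [hB.apply_J_right hJ x x]

end IsHermitianForm

noncomputable def kaehlerModel (J : V →ₗ[ℝ] V) (g Q : LinearMap.BilinForm ℝ V) (x y z u : V) : ℝ :=
  (phi (fun a b => g a b) (fun a b => Q a b) x y z u
    + psi (fun a => J a) (fun a b => g a b) (fun a b => Q a b) x y z u) / 8

section kaehlerModel

variable {J : V →ₗ[ℝ] V} {g Q : LinearMap.BilinForm ℝ V} (hJ : ∀ x, J (J x) = -x)
  (hg : IsHermitianForm J g) (hQ : IsHermitianForm J Q)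
include hJ hg hQ

theorem kaehlerModel_self_J (x : V) : kaehlerModel J g Q x (J x) (J x) x = g x x * Q x x := by
  simp only [kaehlerModel, phi, psi, hJ, map_neg, hg.apply_self_J hJ,
    hQ.apply_self_J hJ, hg.map_J, hQ.map_J, hg.symm (J x) x, hQ.symm (J x) x]
  ring

theorem isKaehlerCurvatureTensor_kaehlerModel :
    IsKaehlerCurvatureTensor J (kaehlerModel J g Q) where
  linear_left y z u :=
    ⟨fun x x' => by simp only [kaehlerModel, phi, psi, map_add, LinearMap.add_apply]; ring,
      fun c x => by
        simp only [kaehlerModel, phi, psi, map_smul, LinearMap.smul_apply, smul_eq_mul]; ring⟩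
  antisymm_left x y z u := by
    simp only [kaehlerModel, phi, psi]
    linear_combination -(Q z (J u) / 4) * hg.apply_J_right hJ x y
      - (g z (J u) / 4) * hQ.apply_J_right hJ x y
  antisymm_right x y z u := by
    simp only [kaehlerModel, phi, psi]
    linear_combination -(g x (J y) / 4) * hQ.apply_J_right hJ z u
      - (Q x (J y) / 4) * hg.apply_J_right hJ z u
  pair_symm x y z u := by
    simp only [kaehlerModel, phi, psi]
    simp only [hg.apply_J_right hJ z y, hg.apply_J_right hJ z x, hg.apply_J_right hJ u y,
      hg.apply_J_right hJ u x, hQ.apply_J_right hJ z y, hQ.apply_J_right hJ z x,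
      hQ.apply_J_right hJ u y, hQ.apply_J_right hJ u x, hg.symm z y, hg.symm z x, hg.symm u y,
      hg.symm u x, hQ.symm z y, hQ.symm z x, hQ.symm u y, hQ.symm u x]
    ring
  bianchi x y z u := by
    simp only [kaehlerModel, phi, psi]
    simp only [hg.apply_J_right hJ y x, hg.apply_J_right hJ z x, hg.apply_J_right hJ z y,
      hQ.apply_J_right hJ y x, hQ.apply_J_right hJ z x, hQ.apply_J_right hJ z y,
      hg.symm y x, hg.symm z x, hg.symm z y, hQ.symm y x, hQ.symm z x, hQ.symm z y]
    ring
  map_J x y z u := by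
    simp only [kaehlerModel, phi, psi, hJ, map_neg, hg.apply_J_left hJ, hQ.apply_J_left hJ,
      neg_neg]
    ring

end kaehlerModel

theorem IsKaehlerCurvatureTensor.eq_kaehlerModel {J : V →ₗ[ℝ] V} {T : V → V → V → V → ℝ}
    {g Q : LinearMap.BilinForm ℝ V} (hT : IsKaehlerCurvatureTensor J T) (hJ : ∀ x, J (J x) = -x)
    (hg : IsHermitianForm J g) (hQ : IsHermitianForm J Q)
    (h : ∀ x, T x (J x) (J x) x = g x x * Q x x) : T = kaehlerModel J g Q := by
  have hM := isKaehlerCurvatureTensor_kaehlerModel hJ hg hQ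
  refine sub_eq_zero.1 <| (hT.sub hM).eq_zero_of_holomorphic_sectional hJ fun x => ?_
  simp only [Pi.sub_apply, h, kaehlerModel_self_J hJ hg hQ, sub_self]

noncomputable def hermitianPart (J : V →ₗ[ℝ] V) (B : LinearMap.BilinForm ℝ V) :
    LinearMap.BilinForm ℝ V :=
  LinearMap.mk₂ ℝ (fun x y => (B x y + B y x + B (J x) (J y) + B (J y) (J x)) / 4)
    (fun x x' y => by simp only [map_add, LinearMap.add_apply]; ring)
    (fun c x y => by simp only [map_smul, LinearMap.smul_apply, smul_eq_mul]; ring)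
    (fun x y y' => by simp only [map_add, LinearMap.add_apply]; ring)
    (fun c x y => by simp only [map_smul, LinearMap.smul_apply, smul_eq_mul]; ring)

section hermitianPart

variable {J : V →ₗ[ℝ] V} (B : LinearMap.BilinForm ℝ V)

theorem hermitianPart_apply_self (x : V) :
    hermitianPart J B x x = (B x x + B (J x) (J x)) / 2 := by
  simp only [hermitianPart, LinearMap.mk₂_apply]
  ring

theorem isHermitianForm_hermitianPart (hJ : ∀ x, J (J x) = -x) :
    IsHermitianForm J (hermitianPart J B) where
  symm x y := by
    simp only [hermitianPart, LinearMap.mk₂_apply]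
    ring
  map_J x y := by
    simp only [hermitianPart, LinearMap.mk₂_apply, hJ, map_neg, LinearMap.neg_apply, neg_neg]
    ring

end hermitianPart

theorem IsKaehlerCurvatureTensor.holomorphic_eq_mul_hermitianPart {J : V →ₗ[ℝ] V}
    {T : V → V → V → V → ℝ} {g B : LinearMap.BilinForm ℝ V} (hT : IsKaehlerCurvatureTensor J T)
    (hJ : ∀ x, J (J x) = -x) (hgJ : ∀ x y, g (J x) (J y) = g x y)
    (h : ∀ x, T x (J x) (J x) x = g x x * B x x) (x : V) :
    T x (J x) (J x) x = g x x * hermitianPart J B x x := by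
  have hJx := h (J x)
  rw [hT.holomorphic_map_J hJ, hgJ] at hJx
  rw [hermitianPart_apply_self]
  linear_combination (h x + hJx) / 2

/-- For `x = t • a + v` with `g a a = 1` and `g a v = 0`, this choice of `Q` makes
`P x x x x - g x x * Q x x` affine in `t`. -/
noncomputable def quarticQuotient (g : LinearMap.BilinForm ℝ V)
    (P : V →ₗ[ℝ] V →ₗ[ℝ] V →ₗ[ℝ] V →ₗ[ℝ] ℝ) (a : V) : LinearMap.BilinForm ℝ V :=
  LinearMap.mk₂ ℝ
    (fun x y => P a a x y + P a x a y + P a x y a + P x a a y + P x a y a + P x y a a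
      - 2 * (P x a a a + P a x a a + P a a x a + P a a a x) * g a y
      + 4 * P a a a a * g a x * g a y - P a a a a * g x y)
    (fun x x' y => by simp only [map_add, LinearMap.add_apply]; ring)
    (fun c x y => by simp only [map_smul, LinearMap.smul_apply, smul_eq_mul]; ring)
    (fun x y y' => by simp only [map_add, LinearMap.add_apply]; ring)
    (fun c x y => by simp only [map_smul, LinearMap.smul_apply, smul_eq_mul]; ring)

section quarticQuotient

variable {g : LinearMap.BilinForm ℝ V} {P : V →ₗ[ℝ] V →ₗ[ℝ] V →ₗ[ℝ] V →ₗ[ℝ] ℝ} {a : V}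
  (hg : ∀ x y, g x y = g y x) (ha : g a a = 1)
  (hP : ∀ ξ, g ξ ξ = 0 → P ξ ξ ξ ξ = 0)
include hg ha hP

theorem quartic_eq_mul_quarticQuotient_of_neg {v : V} (hv : g a v = 0) (hvv : g v v < 0)
    (t : ℝ) :
    P (t • a + v) (t • a + v) (t • a + v) (t • a + v)
      = g (t • a + v) (t • a + v) * quarticQuotient g P a (t • a + v) (t • a + v) := by
  set H : ℝ → ℝ := fun r => P (r • a + v) (r • a + v) (r • a + v) (r • a + v)
      - g (r • a + v) (r • a + v) * quarticQuotient g P a (r • a + v) (r • a + v) with hH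
  have hva : g v a = 0 := by rw [hg, hv]
  have affine : ∀ r, H r = H 0 + r * (H 1 - H 0) := by
    intro r
    simp only [hH, quarticQuotient, LinearMap.mk₂_apply, map_add, map_smul, LinearMap.add_apply,
      LinearMap.smul_apply, smul_eq_mul, ha, hv, hva]
    ring
  have hnull : ∀ s, s ^ 2 = -g v v → H s = 0 := by
    intro s hs
    have hξ : g (s • a + v) (s • a + v) = 0 := by
      simp only [map_add, map_smul, LinearMap.add_apply, LinearMap.smul_apply, smul_eq_mul, ha,
        hv, hva]
      linear_combination hs
    simp only [hH, hξ, hP _ hξ, zero_mul, sub_zero]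
  set s := √(-g v v)
  have hs : 0 < s := Real.sqrt_pos.2 (neg_pos.2 hvv)
  have hs₁ := hnull s (Real.sq_sqrt (neg_nonneg.2 hvv.le))
  have hs₂ := hnull (-s) (by rw [neg_sq, Real.sq_sqrt (neg_nonneg.2 hvv.le)])
  rw [affine] at hs₁ hs₂
  have hslope : H 1 - H 0 = 0 := by
    have : 2 * s * (H 1 - H 0) = 0 := by linear_combination hs₁ - hs₂
    simpa [hs.ne'] using this
  have h0 : H 0 = 0 := by linear_combination hs₁ - s * hslope
  have := affine t
  rw [hslope, h0, mul_zero, add_zero] at this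
  exact sub_eq_zero.1 this

theorem quartic_eq_mul_quarticQuotient {b : V} (hab : g a b = 0) (hb : g b b < 0) (x : V) :
    P x x x x = g x x * quarticQuotient g P a x x := by
  have hU : ∀ y, g (y - g a y • a) (y - g a y • a) < 0 →
      P y y y y = g y y * quarticQuotient g P a y y := by
    intro y hy
    have hv : g a (y - g a y • a) = 0 := by
      simp only [map_sub, map_smul, smul_eq_mul, ha, mul_one, sub_self]
    simpa using quartic_eq_mul_quarticQuotient_of_neg hg ha hP hv hy (g a y)
  set ℓ : ℝ → V := fun s => b + s • (x - b)
  set f : ℝ → ℝ := fun s =>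
    P (ℓ s) (ℓ s) (ℓ s) (ℓ s) - g (ℓ s) (ℓ s) * quarticQuotient g P a (ℓ s) (ℓ s)
  have hf : AnalyticOnNhd ℝ f Set.univ := by
    intro s _
    simp only [f, ℓ, quarticQuotient, LinearMap.mk₂_apply, map_add, map_smul, LinearMap.add_apply,
      LinearMap.smul_apply, smul_eq_mul]
    fun_prop
  have hcont : Continuous fun s => g (ℓ s - g a (ℓ s) • a) (ℓ s - g a (ℓ s) • a) := by
    simp only [ℓ, map_add, map_sub, map_smul, LinearMap.add_apply, LinearMap.sub_apply,
      LinearMap.smul_apply, smul_eq_mul]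
    fun_prop
  have hnear : f =ᶠ[𝓝 0] 0 := by
    have h0 : g (ℓ 0 - g a (ℓ 0) • a) (ℓ 0 - g a (ℓ 0) • a) < 0 := by simpa [ℓ, hab] using hb
    filter_upwards [hcont.continuousAt.eventually_lt continuousAt_const h0] with s hs
    exact sub_eq_zero.2 (hU _ hs)
  have := hf.eqOn_zero_of_preconnected_of_eventuallyEq_zero isPreconnected_univ
    (Set.mem_univ 0) hnear (Set.mem_univ 1)
  simpa only [f, ℓ, one_smul, add_sub_cancel, Pi.zero_apply, sub_eq_zero] using this

end quarticQuotient

section SignedOrthonormalBasis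

variable {ι : Type*} [Fintype ι] [DecidableEq ι] {g : LinearMap.BilinForm ℝ V}
  {e : Module.Basis ι ℝ V} {ε : ι → ℝ} (hε : ∀ i, ε i = 1 ∨ ε i = -1)
  (horth : ∀ i j, g (e i) (e j) = if i = j then ε i else 0)
include hε horth

omit hε in
theorem apply_basis_eq_repr_mul (w : V) (i : ι) : g w (e i) = e.repr w i * ε i := by
  conv_lhs => rw [← e.sum_repr w]
  simp only [map_sum, map_smul, LinearMap.sum_apply, LinearMap.smul_apply, horth,
    smul_eq_mul, mul_ite, mul_zero, Finset.sum_ite_eq', Finset.mem_univ, if_true]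

theorem sum_sign_mul_apply_basis (f : V →ₗ[ℝ] ℝ) (w : V) :
    ∑ i, ε i * g w (e i) * f (e i) = f w := by
  conv_rhs => rw [← e.sum_repr w]
  simp only [map_sum, map_smul, smul_eq_mul, apply_basis_eq_repr_mul horth]
  refine Finset.sum_congr rfl fun i _ => ?_
  rcases hε i with h | h <;> rw [h] <;> ring

theorem sum_sign_mul_apply_basis_self :
    ∑ i, ε i * g (e i) (e i) = Fintype.card ι := by
  simp only [horth, if_true]
  rw [Finset.card_univ.symm, Finset.card_eq_sum_ones, Nat.cast_sum, Nat.cast_one]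
  refine Finset.sum_congr rfl fun i _ => ?_
  rcases hε i with h | h <;> rw [h] <;> norm_num

theorem exists_sign_eq_one (hpos : ∃ x, 0 < g x x) : ∃ i, ε i = 1 := by
  by_contra! h
  obtain ⟨x, hx⟩ := hpos
  have hsum := sum_sign_mul_apply_basis hε horth (g x) x
  have : ∑ i, ε i * g x (e i) * g x (e i) ≤ 0 := Finset.sum_nonpos fun i _ => by
    rw [(hε i).resolve_left (h i)]; nlinarith [sq_nonneg (g x (e i))]
  linarith

theorem exists_sign_eq_neg_one (hneg : ∃ x, g x x < 0) : ∃ i, ε i = -1 := by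
  by_contra! h
  obtain ⟨x, hx⟩ := hneg
  have hsum := sum_sign_mul_apply_basis hε horth (g x) x
  have : 0 ≤ ∑ i, ε i * g x (e i) * g x (e i) := Finset.sum_nonneg fun i _ => by
    rw [(hε i).resolve_right (h i)]; nlinarith [sq_nonneg (g x (e i))]
  linarith

theorem sum_sign_mul_kaehlerModel {J : V →ₗ[ℝ] V} {Q : LinearMap.BilinForm ℝ V}
    (hJ : ∀ x, J (J x) = -x) (hg : IsHermitianForm J g) (hQ : IsHermitianForm J Q) (y z : V) :
    ∑ i, ε i * kaehlerModel J g Q (e i) y z (e i)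
      = ((Fintype.card ι + 4) * Q y z + (∑ i, ε i * Q (e i) (e i)) * g y z) / 8 := by
  have hsum := sum_sign_mul_apply_basis hε horth
  have hterm : ∀ i, ε i * kaehlerModel J g Q (e i) y z (e i)
      = (ε i * g (e i) (e i) * Q y z + ε i * Q (e i) (e i) * g y z
        - ε i * g z (e i) * Q y (e i) - ε i * g y (e i) * Q z (e i)
        - 3 * (ε i * g (J z) (e i) * Q y (J (e i)))
        - 3 * (ε i * g (J y) (e i) * Q z (J (e i)))) / 8 := by
    intro i
    simp only [kaehlerModel, phi, psi, hg.apply_self_J hJ, hQ.apply_self_J hJ,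
      hg.apply_J_right hJ y (e i), hg.apply_J_right hJ z (e i), hQ.apply_J_right hJ (e i) y,
      hQ.apply_J_right hJ (e i) z, hg.symm (e i), hQ.symm (e i)]
    ring
  simp only [Finset.sum_congr rfl fun i _ => hterm i, ← Finset.sum_div, Finset.sum_add_distrib,
    Finset.sum_sub_distrib, ← Finset.mul_sum, ← Finset.sum_mul]
  have hJz : ∑ i, ε i * g (J z) (e i) * Q y (J (e i)) = -Q y z := by
    simpa [hJ] using hsum ((Q y).comp J) (J z)
  have hJy : ∑ i, ε i * g (J y) (e i) * Q z (J (e i)) = -Q y z := by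
    simpa [hJ, hQ.symm z] using hsum ((Q z).comp J) (J y)
  rw [sum_sign_mul_apply_basis_self hε horth, hsum, hsum, hJz, hJy, hQ.symm z]
  ring

theorem eq_of_sum_sign_mul_kaehlerModel {n : ℕ} (hcard : Fintype.card ι = 2 * n)
    {J : V →ₗ[ℝ] V} {Q : LinearMap.BilinForm ℝ V} (hJ : ∀ x, J (J x) = -x)
    (hg : IsHermitianForm J g) (hQ : IsHermitianForm J Q) {S : V → V → ℝ}
    (hS : ∀ y z, S y z = ∑ i, ε i * kaehlerModel J g Q (e i) y z (e i))
    {τ : ℝ} (hτ : τ = ∑ i, ε i * S (e i) (e i)) (y z : V) :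
    Q y z = 4 / (n + 2) * S y z - τ / ((n + 1) * (n + 2)) * g y z := by
  set t := ∑ i, ε i * Q (e i) (e i)
  have hS' : ∀ y z, S y z = ((2 * n + 4) * Q y z + t * g y z) / 8 := by
    intro y z
    rw [hS, sum_sign_mul_kaehlerModel hε horth hJ hg hQ, hcard, Nat.cast_mul, Nat.cast_ofNat]
  have hτ' : τ = (n + 1) / 2 * t := by
    calc τ = ∑ i, ((2 * n + 4) / 8 * (ε i * Q (e i) (e i)) + t / 8 * (ε i * g (e i) (e i))) := by
          rw [hτ]; exact Finset.sum_congr rfl fun i _ => by rw [hS']; ring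
      _ = (n + 1) / 2 * t := by
          rw [Finset.sum_add_distrib, ← Finset.mul_sum, ← Finset.mul_sum,
            sum_sign_mul_apply_basis_self hε horth, hcard, Nat.cast_mul, Nat.cast_ofNat]
          ring
  rw [hS', hτ']
  field_simp
  ring

end SignedOrthonormalBasis

end

theorem stmt_16_general {V : Type*} [AddCommGroup V] [Module ℝ V]
    {n : ℕ}
    (g : V →ₗ[ℝ] V →ₗ[ℝ] ℝ)
    (hg_symm : ∀ x y, g x y = g y x)
    (hpos : ∃ x, 0 < g x x) (hneg : ∃ x, g x x < 0)
    (J : V →ₗ[ℝ] V) (hJ : ∀ x, J (J x) = -x)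
    (hJg : ∀ x y, g (J x) (J y) = g x y)
    (R : V →ₗ[ℝ] V →ₗ[ℝ] V →ₗ[ℝ] V →ₗ[ℝ] ℝ)
    (hR1 : ∀ x y z u, R x y z u = -R y x z u)
    (hR2 : ∀ x y z u, R x y z u = -R x y u z)
    (hR3 : ∀ x y z u, R x y z u = R z u x y)
    (hBianchi : ∀ x y z u, R x y z u + R y z x u + R z x y u = 0)
    (hRJ : ∀ x y z u, R (J x) (J y) z u = R x y z u)
    (e : Module.Basis (Fin (2 * n)) ℝ V) (ε : Fin (2 * n) → ℝ)
    (hε : ∀ i, ε i = 1 ∨ ε i = -1)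
    (horth : ∀ i j, g (e i) (e j) = if i = j then ε i else 0)
    (S : V → V → ℝ) (hS : ∀ y z, S y z = ∑ i, ε i * R (e i) y z (e i))
    (τ : ℝ) (hτ : τ = ∑ i, ε i * S (e i) (e i))
    (hiso : ∀ ξ : V, ξ ≠ 0 → g ξ ξ = 0 → R ξ (J ξ) (J ξ) ξ = 0) :
    ∀ x y z u : V, R x y z u
      = (1 / (2 * ((n : ℝ) + 2)))
          * (phi (fun a b => g a b) S x y z u + psi (fun a => J a) (fun a b => g a b) S x y z u)
        - (τ / (4 * ((n : ℝ) + 1) * ((n : ℝ) + 2)))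
          * (pi1 (fun a b => g a b) x y z u + pi2 (fun a => J a) (fun a b => g a b) x y z u) := by
  have hg : IsHermitianForm J g := ⟨hg_symm, hJg⟩
  have hR : IsKaehlerCurvatureTensor J (fun x y z u => R x y z u) :=
    { linear_left := fun y z u => ⟨fun x x' => by simp, fun c x => by simp⟩
      antisymm_left := hR1, antisymm_right := hR2, pair_symm := hR3, bianchi := hBianchi
      map_J := hRJ }
  obtain ⟨i, hi⟩ := exists_sign_eq_one hε horth hpos
  obtain ⟨j, hj⟩ := exists_sign_eq_neg_one hε horth hneg
  have hij : i ≠ j := by rintro rfl; linarith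
  have hnull : ∀ ξ, g ξ ξ = 0 → R ξ (J ξ) (J ξ) ξ = 0 := by
    intro ξ hξ
    by_cases h0 : ξ = 0
    · simp [h0]
    · exact hiso ξ h0 hξ
  set P := (R.compl₂ J).compr₂ (LinearMap.lcomp ℝ (V →ₗ[ℝ] ℝ) J)
  set Q := hermitianPart J (quarticQuotient g P (e i))
  have hQ₀ := quartic_eq_mul_quarticQuotient (P := P) hg_symm (by rw [horth, if_pos rfl, hi])
    hnull (by rw [horth, if_neg hij]) (by rw [horth, if_pos rfl, hj]; norm_num)
  have hQ : IsHermitianForm J Q := isHermitianForm_hermitianPart _ hJ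
  have hRM : ∀ x y z u, R x y z u = kaehlerModel J g Q x y z u := by
    rw [← hR.eq_kaehlerModel hJ hg hQ (hR.holomorphic_eq_mul_hermitianPart hJ hJg hQ₀)]
    simp
  have hQ_eq := eq_of_sum_sign_mul_kaehlerModel hε horth (Fintype.card_fin _) hJ hg hQ
    (fun y z => by simp only [hS, hRM]) hτ
  intro x y z u
  rw [hRM]
  simp only [kaehlerModel, phi, psi, pi1, pi2, hQ_eq]
  field_simp
  ring

/-- If a Kähler algebraic curvature tensor on an indefinite space satisfies
R(ξ,Jξ,Jξ,ξ) = 0 for every isotropic ξ, then its Bochner tensor vanishes. -/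
theorem stmt_16 {V : Type*} [AddCommGroup V] [Module ℝ V] [FiniteDimensional ℝ V]
    {n : ℕ} (hn : Module.finrank ℝ V = 2 * n) (hdim : 2 ≤ n)
    (g : V →ₗ[ℝ] V →ₗ[ℝ] ℝ)
    (hg_symm : ∀ x y, g x y = g y x)
    (hg_nondeg : ∀ x, (∀ y, g x y = 0) → x = 0)
    (hpos : ∃ x, 0 < g x x) (hneg : ∃ x, g x x < 0)
    (J : V →ₗ[ℝ] V) (hJ : ∀ x, J (J x) = -x)
    (hJg : ∀ x y, g (J x) (J y) = g x y)
    (R : V →ₗ[ℝ] V →ₗ[ℝ] V →ₗ[ℝ] V →ₗ[ℝ] ℝ)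
    (hR1 : ∀ x y z u, R x y z u = -R y x z u)
    (hR2 : ∀ x y z u, R x y z u = -R x y u z)
    (hR3 : ∀ x y z u, R x y z u = R z u x y)
    (hBianchi : ∀ x y z u, R x y z u + R y z x u + R z x y u = 0)
    (hRJ : ∀ x y z u, R (J x) (J y) z u = R x y z u)
    (e : Module.Basis (Fin (2 * n)) ℝ V) (ε : Fin (2 * n) → ℝ)
    (hε : ∀ i, ε i = 1 ∨ ε i = -1)
    (horth : ∀ i j, g (e i) (e j) = if i = j then ε i else 0)
    (S : V → V → ℝ) (hS : ∀ y z, S y z = ∑ i, ε i * R (e i) y z (e i))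
    (τ : ℝ) (hτ : τ = ∑ i, ε i * S (e i) (e i))
    (hiso : ∀ ξ : V, ξ ≠ 0 → g ξ ξ = 0 → R ξ (J ξ) (J ξ) ξ = 0) :
    ∀ x y z u : V, R x y z u
      = (1 / (2 * ((n : ℝ) + 2)))
          * (phi (fun a b => g a b) S x y z u + psi (fun a => J a) (fun a b => g a b) S x y z u)
        - (τ / (4 * ((n : ℝ) + 1) * ((n : ℝ) + 2)))
          * (pi1 (fun a b => g a b) x y z u + pi2 (fun a => J a) (fun a b => g a b) x y z u) :=
  stmt_16_general g hg_symm hpos hneg J hJ hJg R hR1 hR2 hR3 hBianchi hRJ e ε hε horth S hS τ hτ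
    hiso
end
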